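/- arXiv:2504.04258 — 2 statements merged into one kernel-verified Lean document; each statement's English description precedes it below -/
import Mathlib

section
/- Let p_1, ..., p_m be real numbers in [0,1] such that K = sum_{i=1}^m p_i is an integer. Let X_1, ..., X_m be independent Bernoulli random variables with P(X_i = 1) = p_i. Then P(sum_{i=1}^m X_i = K) >= 1/(m+1). -/
open Finset Polynomial

namespace PBaux



variable {ι : Type*} [DecidableEq ι]

noncomputable def gen (s : Finset ι) (p : ι → ℝ) : Polynomial ℝ :=
  ∏ i ∈ s, (C (1 - p i) + C (p i) * X)

noncomputable def PB (s : Finset ι) (p : ι → ℝ) (K : ℕ) : ℝ :=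
  ∑ A ∈ s.powersetCard K, (∏ i ∈ A, p i) * ∏ i ∈ s \ A, (1 - p i)

lemma PB_eq_coeff (s : Finset ι) (p : ι → ℝ) (K : ℕ) :
    PB s p K = (gen s p).coeff K := by
  have hg : gen s p = ∏ i ∈ s, (C (p i) * X + C (1 - p i)) :=
    Finset.prod_congr rfl fun i _ => add_comm _ _
  rw [hg, Finset.prod_add, Polynomial.finset_sum_coeff]
  rw [PB, Finset.powersetCard_eq_filter, Finset.sum_filter]
  refine Finset.sum_congr rfl fun A hA => ?_
  have : (∏ i ∈ A, C (p i) * X) * ∏ i ∈ s \ A, C (1 - p i)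
      = C ((∏ i ∈ A, p i) * ∏ i ∈ s \ A, (1 - p i)) * X ^ A.card := by
    rw [Finset.prod_mul_distrib, Finset.prod_const, map_mul, map_prod, map_prod]
    ring
  rw [this, Polynomial.coeff_C_mul, Polynomial.coeff_X_pow]
  by_cases h : A.card = K
  · simp [h]
  · rw [if_neg h, if_neg (fun hh => h hh.symm), mul_zero]

lemma PB_congr (s : Finset ι) {p q : ι → ℝ} (h : ∀ i ∈ s, q i = p i) (K : ℕ) :
    PB s q K = PB s p K := by
  unfold PB
  refine Finset.sum_congr rfl fun A hA => ?_
  have hAs : A ⊆ s := (Finset.mem_powersetCard.1 hA).1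
  congr 1
  · exact Finset.prod_congr rfl fun i hi => h i (hAs hi)
  · exact Finset.prod_congr rfl fun i hi => by rw [h i (Finset.mem_sdiff.1 hi).1]

lemma gen_congr (s : Finset ι) {p q : ι → ℝ} (h : ∀ i ∈ s, q i = p i) :
    gen s q = gen s p :=
  Finset.prod_congr rfl fun i hi => by rw [h i hi]




lemma binom_le (n K : ℕ) (x : ℝ) (h0 : 0 ≤ x) (h1 : x ≤ 1) (hK : (n : ℝ) * x = K) :
    1 / (n + 1 : ℝ) ≤ (n.choose K : ℝ) * x ^ K * (1 - x) ^ (n - K) := by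
  have h1x : (0:ℝ) ≤ 1 - x := by linarith
  set a : ℕ → ℝ := fun k => (n.choose k : ℝ) * x ^ k * (1 - x) ^ (n - k) with ha
  have hnn : ∀ k, 0 ≤ a k := fun k => by positivity
  have hKn : K ≤ n := by
    by_contra h
    push_neg at h
    have : (K : ℝ) ≤ n := by
      rw [← hK]
      nlinarith [Nat.cast_nonneg (α := ℝ) n]
    have : (n : ℝ) < K := by exact_mod_cast h
    linarith
  -- step inequalities
  have key : ∀ k, k < n →
      (((n.choose (k+1) : ℝ)) * x) * ((k:ℝ)+1) = ((n.choose k : ℝ) * (((n:ℝ) - k) * x)) := by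
    intro k hk
    have := Nat.choose_succ_right_eq n k
    have hc : ((n.choose (k+1) * (k+1) : ℕ) : ℝ) = ((n.choose k * (n - k) : ℕ) : ℝ) := by
      exact_mod_cast congrArg (Nat.cast (R := ℝ)) this
    push_cast [Nat.cast_sub hk.le] at hc
    linear_combination x * hc
  have pow_split : ∀ k, k < n → a k = ((n.choose k : ℝ) * (1 - x)) * (x ^ k * (1 - x) ^ (n - (k+1)))
      ∧ a (k+1) = ((n.choose (k+1) : ℝ) * x) * (x ^ k * (1 - x) ^ (n - (k+1))) := by
    intro k hk
    constructor
    · have : n - k = (n - (k+1)) + 1 := by omega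
      rw [ha]; simp only []
      rw [this, pow_succ]
      ring
    · rw [ha]; simp only []
      rw [pow_succ]
      ring
  have step_up : ∀ k, k + 1 ≤ K → a k ≤ a (k+1) := by
    intro k hk
    have hkn : k < n := by omega
    obtain ⟨e1, e2⟩ := pow_split k hkn
    rw [e1, e2]
    have hbase : (n.choose k : ℝ) * (1 - x) ≤ (n.choose (k+1) : ℝ) * x := by
      have hKx : (k:ℝ) + 1 ≤ (n:ℝ) * x := by
        rw [hK]; exact_mod_cast hk
      have hkey := key k hkn
      have hcn : (0:ℝ) ≤ (n.choose k : ℝ) := Nat.cast_nonneg _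
      nlinarith [hcn, h0, h1]
    exact mul_le_mul_of_nonneg_right hbase (by positivity)
  have step_down : ∀ k, K ≤ k → a (k+1) ≤ a k := by
    intro k hk
    by_cases hkn : k < n
    · obtain ⟨e1, e2⟩ := pow_split k hkn
      rw [e1, e2]
      have hbase : (n.choose (k+1) : ℝ) * x ≤ (n.choose k : ℝ) * (1 - x) := by
        have hKx : (n:ℝ) * x ≤ (k:ℝ) := by
          rw [hK]; exact_mod_cast hk
        have hkey := key k hkn
        have hcn : (0:ℝ) ≤ (n.choose k : ℝ) := Nat.cast_nonneg _
        nlinarith [hcn, h0, h1]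
      exact mul_le_mul_of_nonneg_right hbase (by positivity)
    · have : n.choose (k+1) = 0 := Nat.choose_eq_zero_of_lt (by omega)
      have : a (k+1) = 0 := by rw [ha]; simp [this]
      rw [this]; exact hnn k
  have a_le : ∀ k, a k ≤ a K := by
    have up : ∀ j, j ≤ K → a (K - j) ≤ a K := by
      intro j
      induction j with
      | zero => intro _; simp
      | succ j ih =>
        intro hj
        have h1' : a (K - (j+1)) ≤ a (K - j) := by
          have : K - (j+1) + 1 = K - j := by omega
          have := step_up (K - (j+1)) (by omega)
          rwa [‹K - (j+1) + 1 = K - j›] at this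
        exact h1'.trans (ih (by omega))
    have down : ∀ j, a (K + j) ≤ a K := by
      intro j
      induction j with
      | zero => simp
      | succ j ih =>
        have : a (K + j + 1) ≤ a (K + j) := step_down (K + j) (by omega)
        rw [show K + (j+1) = K + j + 1 by omega]
        exact this.trans ih
    intro k
    rcases le_total k K with h | h
    · have := up (K - k) (by omega)
      rwa [show K - (K - k) = k by omega] at this
    · have := down (k - K)
      rwa [show K + (k - K) = k by omega] at this
  have hsum : ∑ k ∈ range (n+1), a k = 1 := by
    have hb := add_pow x (1 - x) n
    simp only [add_sub_cancel, one_pow] at hb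
    calc ∑ k ∈ range (n+1), a k
        = ∑ k ∈ range (n+1), x ^ k * (1-x)^(n-k) * (n.choose k : ℝ) :=
          Finset.sum_congr rfl fun k _ => by simp only [ha]; ring
      _ = 1 := hb.symm
  have hcard : (1:ℝ) ≤ (n + 1 : ℝ) * a K := by
    calc (1:ℝ) = ∑ k ∈ range (n+1), a k := hsum.symm
    _ ≤ ∑ _k ∈ range (n+1), a K := Finset.sum_le_sum fun k _ => a_le k
    _ = (n + 1 : ℝ) * a K := by
        rw [Finset.sum_const, Finset.card_range]
        push_cast
        ring
  rw [div_le_iff₀ (by positivity)]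
  calc (1:ℝ) ≤ (n+1:ℝ) * a K := hcard
  _ = a K * (n+1:ℝ) := by ring

lemma PB_const (s : Finset ι) (p : ι → ℝ) (x : ℝ) (h : ∀ i ∈ s, p i = x) (K : ℕ) :
    PB s p K = (s.card.choose K : ℝ) * x ^ K * (1 - x) ^ (s.card - K) := by
  unfold PB
  have hterm : ∀ A ∈ s.powersetCard K,
      (∏ i ∈ A, p i) * ∏ i ∈ s \ A, (1 - p i) = x ^ K * (1 - x) ^ (s.card - K) := by
    intro A hA
    obtain ⟨hAs, hcard⟩ := Finset.mem_powersetCard.1 hA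
    rw [Finset.prod_congr rfl (fun i hi => h i (hAs hi)), Finset.prod_const, hcard,
      Finset.prod_congr rfl (fun i hi => by rw [h i (Finset.mem_sdiff.1 hi).1]),
      Finset.prod_const, Finset.card_sdiff_of_subset hAs, hcard]
  rw [Finset.sum_congr rfl hterm, Finset.sum_const, Finset.card_powersetCard, nsmul_eq_mul]
  ring

lemma gen_erase (s : Finset ι) (p : ι → ℝ) {j : ι} (hj : j ∈ s) :
    gen s p = (C (1 - p j) + C (p j) * X) * gen (s.erase j) p :=
  (Finset.mul_prod_erase s _ hj).symm

lemma PB_erase_zero {s : Finset ι} {p : ι → ℝ} {j : ι} (hj : j ∈ s) (h0 : p j = 0) (K : ℕ) :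
    PB s p K = PB (s.erase j) p K := by
  rw [PB_eq_coeff, PB_eq_coeff, gen_erase s p hj, h0]
  norm_num

lemma PB_erase_one {s : Finset ι} {p : ι → ℝ} {j : ι} (hj : j ∈ s) (h1 : p j = 1) (K : ℕ) :
    PB s p (K + 1) = PB (s.erase j) p K := by
  rw [PB_eq_coeff, PB_eq_coeff, gen_erase s p hj, h1]
  norm_num [Polynomial.coeff_X_mul]

lemma PB_update2 {s : Finset ι} {i j : ι} (hi : i ∈ s) (hj : j ∈ s) (hij : i ≠ j)
    (p : ι → ℝ) (K : ℕ) (a b : ℝ) :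
    PB s (Function.update (Function.update p i a) j b) K =
      (1-a)*(1-b) * (gen ((s.erase i).erase j) p).coeff K
      + (a*(1-b)+(1-a)*b) * (X * gen ((s.erase i).erase j) p).coeff K
      + (a*b) * (X^2 * gen ((s.erase i).erase j) p).coeff K := by
  classical
  set q := Function.update (Function.update p i a) j b with hq
  set R := gen ((s.erase i).erase j) p with hR
  have hqi : q i = a := by
    rw [hq, Function.update_of_ne hij, Function.update_self]
  have hqj : q j = b := by rw [hq, Function.update_self]
  have hji : j ∈ s.erase i := Finset.mem_erase_of_ne_of_mem (Ne.symm hij) hj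
  have hgen : gen s q = (C (1-a) + C a * X) * ((C (1-b) + C b * X) * R) := by
    rw [gen_erase s q hi, gen_erase (s.erase i) q hji, hqi, hqj]
    congr 1
    congr 1
    rw [hR]
    apply gen_congr
    intro k hk
    have hkj : k ≠ j := Finset.ne_of_mem_erase hk
    have hki : k ≠ i := Finset.ne_of_mem_erase (Finset.mem_of_mem_erase hk)
    rw [hq, Function.update_of_ne hkj, Function.update_of_ne hki]
  rw [PB_eq_coeff, hgen]
  have hexp : (C (1-a) + C a * X) * ((C (1-b) + C b * X) * R)
      = C ((1-a)*(1-b)) * R + C (a*(1-b)+(1-a)*b) * (X * R) + C (a*b) * (X^2 * R) := by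
    simp only [map_mul, map_add, map_sub, map_one]
    ring
  rw [hexp]
  simp only [Polynomial.coeff_add, Polynomial.coeff_C_mul]


theorem aux (s : Finset ι) :
    ∀ (p : ι → ℝ), (∀ i ∈ s, p i ∈ Set.Icc (0:ℝ) 1) → ∀ K : ℕ, (∑ i ∈ s, p i) = (K : ℝ) →
    1 / (s.card + 1 : ℝ) ≤ PB s p K := by
  induction s using Finset.strongInductionOn with
  | _ s IH =>
  intro p hp K hK
  rcases Finset.eq_empty_or_nonempty s with rfl | hne
  · have hK0 : K = 0 := by
      have : (K : ℝ) = 0 := by simpa using hK.symm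
      exact_mod_cast this
    subst hK0
    simp [PB]
  classical
  -- the compact domain
  set Box : Set (ι → ℝ) := Set.univ.pi (fun i => if i ∈ s then Set.Icc (0:ℝ) 1 else {0}) with hBox
  set D : Set (ι → ℝ) := Box ∩ {q | ∑ i ∈ s, q i = (K:ℝ)} with hD
  have hBoxCompact : IsCompact Box := by
    apply isCompact_univ_pi
    intro i
    by_cases h : i ∈ s <;> simp [h, isCompact_Icc, isCompact_singleton]
  have hDcompact : IsCompact D :=
    hBoxCompact.inter_right
      (isClosed_eq (continuous_finset_sum _ fun i _ => continuous_apply i) continuous_const)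
  set q₀ : ι → ℝ := fun i => if i ∈ s then p i else 0 with hq₀
  have hq₀D : q₀ ∈ D := by
    constructor
    · intro i _
      by_cases h : i ∈ s
      · simpa [hq₀, h] using hp i h
      · simp [hq₀, h]
    · have : ∑ i ∈ s, q₀ i = ∑ i ∈ s, p i :=
        Finset.sum_congr rfl fun i hi => by simp [hq₀, hi]
      simpa [this] using hK
  have hFcont : Continuous (fun q : ι → ℝ => PB s q K) := by
    unfold PB
    exact continuous_finset_sum _ fun A _ =>
      ((continuous_finset_prod _ fun i _ => continuous_apply i).mul
        (continuous_finset_prod _ fun i _ => continuous_const.sub (continuous_apply i)))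
  obtain ⟨p₀, hp₀D, hp₀min⟩ := hDcompact.exists_isMinOn ⟨q₀, hq₀D⟩ hFcont.continuousOn
  set M : Set (ι → ℝ) := D ∩ {q | PB s q K = PB s p₀ K} with hM
  have hMcompact : IsCompact M := hDcompact.inter_right (isClosed_eq hFcont continuous_const)
  have hVcont : Continuous (fun q : ι → ℝ => ∑ i ∈ s, (q i)^2) :=
    continuous_finset_sum _ fun i _ => (continuous_apply i).pow 2
  obtain ⟨pm, hpmM, hpmV⟩ := hMcompact.exists_isMinOn ⟨p₀, hp₀D, rfl⟩ hVcont.continuousOn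
  obtain ⟨hpmD, hpmF⟩ := hpmM
  have hmin : ∀ q ∈ D, PB s pm K ≤ PB s q K := by
    intro q hq
    have := isMinOn_iff.1 hp₀min q hq
    rw [Set.mem_setOf_eq] at hpmF
    linarith [hpmF]
  have hstart : PB s pm K ≤ PB s p K := by
    rw [← PB_congr s (show ∀ i ∈ s, q₀ i = p i from fun i hi => by simp [hq₀, hi]) K]
    exact hmin q₀ hq₀D
  have hpmIcc : ∀ i ∈ s, pm i ∈ Set.Icc (0:ℝ) 1 := by
    intro i hi
    have := hpmD.1 i (Set.mem_univ i)
    simpa [hi] using this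
  have hpmSum : ∑ i ∈ s, pm i = (K:ℝ) := hpmD.2
  have hpmZero : ∀ i ∉ s, pm i = 0 := by
    intro i hi
    have := hpmD.1 i (Set.mem_univ i)
    simpa [hi] using this
  have hcard1 : 1 ≤ s.card := Finset.card_pos.2 hne
  suffices h : 1 / (s.card + 1 : ℝ) ≤ PB s pm K by linarith
  -- case: some coordinate is 0
  by_cases hzero : ∃ j ∈ s, pm j = 0
  · obtain ⟨j, hjs, hj0⟩ := hzero
    have hIH := IH (s.erase j) (Finset.erase_ssubset hjs) pm
      (fun i hi => hpmIcc i (Finset.mem_of_mem_erase hi)) K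
      (by rw [Finset.sum_erase _ hj0]; exact hpmSum)
    rw [PB_erase_zero hjs hj0]
    refine le_trans ?_ hIH
    rw [Finset.card_erase_of_mem hjs]
    have h1 : ((s.card - 1 : ℕ) : ℝ) + 1 ≤ (s.card : ℝ) + 1 := by
      have : ((s.card - 1 : ℕ) : ℝ) ≤ (s.card : ℝ) := by
        exact_mod_cast Nat.sub_le _ _
      linarith
    apply one_div_le_one_div_of_le
    · positivity
    · exact h1
  by_cases hone : ∃ j ∈ s, pm j = 1
  · obtain ⟨j, hjs, hj1⟩ := hone
    have hK1 : 1 ≤ K := by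
      by_contra hc
      push_neg at hc
      interval_cases K
      have hnonneg : ∀ i ∈ s, 0 ≤ pm i := fun i hi => (hpmIcc i hi).1
      have := Finset.single_le_sum hnonneg hjs
      rw [hpmSum] at this
      norm_num [hj1] at this
    obtain ⟨K', rfl⟩ : ∃ K', K = K' + 1 := ⟨K - 1, by omega⟩
    have hsum' : ∑ i ∈ s.erase j, pm i = (K' : ℝ) := by
      have := Finset.add_sum_erase s pm hjs
      push_cast at hpmSum ⊢
      linarith [this, hpmSum]
    have hIH := IH (s.erase j) (Finset.erase_ssubset hjs) pm
      (fun i hi => hpmIcc i (Finset.mem_of_mem_erase hi)) K' hsum'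
    rw [PB_erase_one hjs hj1]
    refine le_trans ?_ hIH
    rw [Finset.card_erase_of_mem hjs]
    apply one_div_le_one_div_of_le
    · positivity
    · have : ((s.card - 1 : ℕ) : ℝ) ≤ (s.card : ℝ) := by exact_mod_cast Nat.sub_le _ _
      linarith
  -- now all coordinates are in (0,1)
  push_neg at hzero hone
  have hopen : ∀ i ∈ s, 0 < pm i ∧ pm i < 1 := by
    intro i hi
    obtain ⟨h0, h1⟩ := hpmIcc i hi
    exact ⟨lt_of_le_of_ne h0 (Ne.symm (hzero i hi)), lt_of_le_of_ne h1 (hone i hi)⟩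
  obtain ⟨i₀, hi₀⟩ := hne
  by_cases hconst : ∀ i ∈ s, pm i = pm i₀
  · -- binomial case
    set x := pm i₀ with hx
    have hx0 : 0 ≤ x := (hpmIcc i₀ hi₀).1
    have hx1 : x ≤ 1 := (hpmIcc i₀ hi₀).2
    have hnx : (s.card : ℝ) * x = (K : ℝ) := by
      rw [← hpmSum, Finset.sum_congr rfl hconst, Finset.sum_const, nsmul_eq_mul]
    rw [PB_const s pm x hconst K]
    exact binom_le s.card K x hx0 hx1 hnx
  · -- unequal pair: derive a contradiction with minimality
    exfalso
    push_neg at hconst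
    obtain ⟨i₁, hi₁s, hi₁ne⟩ := hconst
    -- get i, j ∈ s with pm i < pm j
    obtain ⟨i, j, his, hjs, hij, hlt⟩ :
        ∃ i j, i ∈ s ∧ j ∈ s ∧ i ≠ j ∧ pm i < pm j := by
      rcases lt_or_gt_of_ne hi₁ne with h | h
      · exact ⟨i₁, i₀, hi₁s, hi₀, fun he => hi₁ne (congrArg pm he), h⟩
      · exact ⟨i₀, i₁, hi₀, hi₁s, fun he => hi₁ne (congrArg pm he).symm, h⟩
    set x₀ := pm i with hx₀
    set y₀ := pm j with hy₀
    set u := (gen ((s.erase i).erase j) pm).coeff K with hu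
    set v := (X * gen ((s.erase i).erase j) pm).coeff K with hv
    set w := (X^2 * gen ((s.erase i).erase j) pm).coeff K with hw
    set upd : ℝ → ℝ → (ι → ℝ) := fun a b => Function.update (Function.update pm i a) j b with hupd
    have hform : ∀ a b : ℝ, PB s (upd a b) K
        = (1-a)*(1-b) * u + (a*(1-b)+(1-a)*b) * v + (a*b) * w :=
      fun a b => PB_update2 his hjs hij pm K a b
    have horig : upd x₀ y₀ = pm := by
      rw [hupd]
      simp only [hx₀, hy₀]
      rw [Function.update_eq_self, Function.update_eq_self]
    -- sums over s after update
    have hsum_upd : ∀ (g : ℝ → ℝ) (a b : ℝ),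
        ∑ k ∈ s, g (upd a b k) = g a + g b + ∑ k ∈ (s.erase i).erase j, g (pm k) := by
      intro g a b
      have hcomp : (fun k => g (upd a b k))
          = Function.update (Function.update (fun k => g (pm k)) i (g a)) j (g b) := by
        funext k
        by_cases hk : k = j
        · subst hk; simp [hupd]
        · by_cases hk' : k = i
          · subst hk'; simp [hupd, Function.update_of_ne hij, hk]
          · simp [hupd, Function.update_of_ne hk, Function.update_of_ne hk']
      rw [hcomp, Finset.sum_update_of_mem hjs]
      have hie : i ∈ s \ {j} := by
        rw [Finset.sdiff_singleton_eq_erase]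
        exact Finset.mem_erase_of_ne_of_mem hij his
      rw [Finset.sum_update_of_mem hie]
      simp only [Finset.sdiff_singleton_eq_erase]
      rw [Finset.erase_right_comm]
      ring
    have hDmem : ∀ a b : ℝ, 0 ≤ a → a ≤ 1 → 0 ≤ b → b ≤ 1 → a + b = x₀ + y₀ →
        upd a b ∈ D := by
      intro a b ha0 ha1 hb0 hb1 hab
      constructor
      · intro k _
        by_cases hk : k = j
        · subst hk
          simp [hupd, hjs, Set.mem_Icc, hb0, hb1]
        · by_cases hk' : k = i
          · subst hk'
            simp [hupd, his, Function.update_of_ne hij, Set.mem_Icc, ha0, ha1]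
          · have : upd a b k = pm k := by
              simp [hupd, Function.update_of_ne hk, Function.update_of_ne hk']
            rw [this]
            by_cases hks : k ∈ s
            · simpa [hks] using hpmD.1 k (Set.mem_univ k)
            · simpa [hks] using hpmD.1 k (Set.mem_univ k)
      · show ∑ k ∈ s, upd a b k = (K:ℝ)
        have h1 := hsum_upd id a b
        have h2 := hsum_upd id x₀ y₀
        simp only [id] at h1 h2
        rw [horig] at h2
        rw [h1, ← hpmSum, h2]
        linarith
    -- difference formula
    have hdiff : ∀ a b : ℝ, a + b = x₀ + y₀ →
        PB s (upd a b) K - PB s pm K = (a*b - x₀*y₀) * (u - 2*v + w) := by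
      intro a b hab
      rw [← horig, hform, hform]
      linear_combination (v - u) * hab
    have hx0pos : 0 < x₀ := (hopen i his).1
    have hPBorig : PB s (upd x₀ y₀) K = PB s pm K := by rw [horig]
    have hx0lt : x₀ < 1 := (hopen i his).2
    have hy0pos : 0 < y₀ := (hopen j hjs).1
    have hy0lt : y₀ < 1 := (hopen j hjs).2
    have hsq : 0 < (x₀ - y₀)^2 := by
      have : x₀ - y₀ ≠ 0 := by intro h; linarith [hlt]
      positivity
    have hpmFeq : PB s pm K = PB s p₀ K := hpmF
    clear_value x₀ y₀ u v w upd
    rcases lt_trichotomy (u - 2*v + w) 0 with hG | hG | hG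
    · -- Γ < 0 : equalize strictly decreases PB, contradiction with minimality
      set mid := (x₀ + y₀)/2 with hmid
      have hmem := hDmem mid mid (by rw [hmid]; linarith) (by rw [hmid]; linarith)
        (by rw [hmid]; linarith) (by rw [hmid]; linarith) (by rw [hmid]; ring)
      have hd := hdiff mid mid (by rw [hmid]; ring)
      have hle := hmin _ hmem
      have hpos : 0 < mid*mid - x₀*y₀ := by rw [hmid]; nlinarith [hsq]
      have hprod : (mid*mid - x₀*y₀) * (u - 2*v + w) < 0 := mul_neg_of_pos_of_neg hpos hG
      linarith [hle, hd, hprod]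
    · -- Γ = 0 : equalize keeps PB, strictly decreases sum of squares
      set mid := (x₀ + y₀)/2 with hmid
      have hmem := hDmem mid mid (by rw [hmid]; linarith) (by rw [hmid]; linarith)
        (by rw [hmid]; linarith) (by rw [hmid]; linarith) (by rw [hmid]; ring)
      have hd := hdiff mid mid (by rw [hmid]; ring)
      rw [hG, mul_zero] at hd
      have hupdM : upd mid mid ∈ M := by
        refine ⟨hmem, ?_⟩
        have hpmF' : PB s pm K = PB s p₀ K := hpmF
        show PB s (upd mid mid) K = PB s p₀ K
        linarith [hd, hpmFeq]
      have hVle := isMinOn_iff.1 hpmV _ hupdM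
      have h1 := hsum_upd (fun t => t^2) mid mid
      have h2 := hsum_upd (fun t => t^2) x₀ y₀
      rw [horig] at h2
      rw [h1, h2] at hVle
      rw [hmid] at hVle
      nlinarith [hsq, hVle]
    · -- Γ > 0 : spread apart strictly decreases PB
      set t := min x₀ (1 - y₀) with ht
      have htpos : 0 < t := lt_min hx0pos (by linarith)
      have htx : t ≤ x₀ := min_le_left _ _
      have hty : t ≤ 1 - y₀ := min_le_right _ _
      have hmem := hDmem (x₀ - t) (y₀ + t) (by linarith) (by linarith)
        (by linarith) (by linarith) (by ring)
      have hd := hdiff (x₀ - t) (y₀ + t) (by ring)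
      have hle := hmin _ hmem
      have hneg : (x₀ - t)*(y₀ + t) - x₀*y₀ < 0 := by
        have e : (x₀ - t)*(y₀ + t) - x₀*y₀ = t*(x₀ - y₀ - t) := by ring
        rw [e]
        exact mul_neg_of_pos_of_neg htpos (by linarith)
      have hprod : ((x₀ - t)*(y₀ + t) - x₀*y₀) * (u - 2*v + w) < 0 :=
        mul_neg_of_neg_of_pos hneg hG
      linarith [hle, hd, hprod]


end PBaux

/-- If `p 1, ..., p m ∈ [0,1]` sum to an integer `K`, then independent Bernoulli
variables with these success probabilities sum to exactly `K` with probability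
at least `1/(m+1)`. The probability is written explicitly as a sum over the
sets of successful indices. -/
theorem poisson_binomial_integer_mean_mode (m : ℕ) (p : Fin m → ℝ)
    (hp : ∀ i, 0 ≤ p i ∧ p i ≤ 1) (K : ℕ) (hK : ∑ i, p i = (K : ℝ)) :
    (1 : ℝ) / (m + 1) ≤
      ∑ A ∈ Finset.univ.powerset.filter (fun A : Finset (Fin m) => A.card = K),
        (∏ i ∈ A, p i) * ∏ i ∈ Aᶜ, (1 - p i) := by
  classical
  have haux := PBaux.aux (Finset.univ : Finset (Fin m)) p
    (fun i _ => Set.mem_Icc.2 ⟨(hp i).1, (hp i).2⟩) K (by simpa using hK)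
  have hset : (Finset.univ.powerset.filter (fun A : Finset (Fin m) => A.card = K))
      = Finset.powersetCard K Finset.univ := (Finset.powersetCard_eq_filter).symm
  rw [hset]
  have hsum : ∑ A ∈ Finset.powersetCard K (Finset.univ : Finset (Fin m)),
      (∏ i ∈ A, p i) * ∏ i ∈ Aᶜ, (1 - p i) = PBaux.PB Finset.univ p K :=
    Finset.sum_congr rfl fun A _ => by rw [Finset.compl_eq_univ_sdiff]
  rw [hsum]
  simpa using haux
end

section
/- Let T_1, ..., T_ℓ be a sequence of disjoint log(n)-spanners of a simple graph G, meaning each T_i is a subgraph of G - T_1 - ... - T_{i-1} such that every edge (u,v) of G - T_1 - ... - T_{i-1} has a path of length at most log(n) between u and v inside T_i. Then for any edge e = (u,v) in G - T_1 - ... - T_ℓ, the effective resistance of (u,v) in the graph T_1 ∪ ... ∪ T_ℓ is at most log(n)/ℓ. -/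
open Finset
open scoped ENNReal Classical

/-- The Laplacian quadratic form of the weighted graph `w`. -/
noncomputable def quadForm {V : Type*} [Fintype V] (w : V → V → ℝ) (x : V → ℝ) : ℝ :=
  (1 / 2) * ∑ u : V, ∑ v : V, w u v * (x u - x v) ^ 2

/-- Effective resistance between `u` and `v` in the weighted graph `w`,
valued in `ℝ≥0∞`. -/
noncomputable def Reff {V : Type*} [Fintype V] (w : V → V → ℝ) (u v : V) : ℝ≥0∞ :=
  ⨆ x : V → ℝ, ENNReal.ofReal ((x u - x v) ^ 2) / ENNReal.ofReal (quadForm w x)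

/-- The `{0,1}`-valued edge-weight function of the union of the graphs `T i`. -/
noncomputable def unionWeight {V : Type*} {ℓ : ℕ} (T : Fin ℓ → SimpleGraph V) :
    V → V → ℝ :=
  fun a b => if ∃ i, (T i).Adj a b then 1 else 0

lemma walk_telescope' {V : Type*} {H : SimpleGraph V} (x : V → ℝ) :
    ∀ {a b : V} (p : H.Walk a b),
      x a - x b = (p.darts.map (fun d => x d.toProd.1 - x d.toProd.2)).sum := by
  intro a b p
  induction p with
  | nil => simp
  | cons h p ih =>
    rw [SimpleGraph.Walk.darts_cons, List.map_cons, List.sum_cons, ← ih]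
    ring

lemma list_sq_sum' (l : List ℝ) :
    l.sum ^ 2 ≤ l.length * (l.map (fun t => t ^ 2)).sum := by
  have h1 : l.sum = ∑ i : Fin l.length, l.get i := by
    conv_lhs => rw [← List.ofFn_get l, List.sum_ofFn]
  have h2 : (l.map (fun t => t ^ 2)).sum = ∑ i : Fin l.length, (l.get i) ^ 2 := by
    conv_lhs => rw [← List.ofFn_get l, List.map_ofFn, List.sum_ofFn]
    rfl
  rw [h1, h2]
  simpa using sq_sum_le_card_mul_sum_sq (s := (Finset.univ : Finset (Fin l.length)))
    (f := fun i => l.get i)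

lemma sum_flatMap_map' {α β : Type*} (l : List α) (f : α → List β) (g : β → ℝ) :
    ((l.flatMap f).map g).sum = (l.map (fun a => ((f a).map g).sum)).sum := by
  induction l with
  | nil => simp
  | cons a l ih => simp [List.flatMap_cons, ih]

lemma sum_map_flatMap_pair' {α β : Type*} (l : List α) (h k : α → β) (g : β → ℝ) :
    ((l.flatMap (fun a => [h a, k a])).map g).sum
      = (l.map (fun a => g (h a))).sum + (l.map (fun a => g (k a))).sum := by
  induction l with
  | nil => simp
  | cons a l ih =>
    simp only [List.flatMap_cons, List.map_append, List.sum_append, List.map_cons, List.sum_cons,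
      List.map_nil, List.sum_nil, ih]
    ring

/-- If `T 0, ..., T (ℓ-1)` is a sequence of edge-disjoint `log n`-spanners of `G`
(each `T i` is a spanner of `G` minus the earlier spanners), then any edge `(u,v)`
of `G` not in any `T i` has effective resistance at most `log n / ℓ` in the union
`T 0 ∪ ... ∪ T (ℓ-1)`. -/
theorem spanner_effective_resistance {V : Type*} [Fintype V] [DecidableEq V]
    (G : SimpleGraph V) (ℓ : ℕ) (hℓ : 0 < ℓ) (T : Fin ℓ → SimpleGraph V)
    (hsub : ∀ i, T i ≤ G)
    (hdisj : ∀ i j, i ≠ j → Disjoint (T i) (T j))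
    (hspanner : ∀ (i : Fin ℓ) (a b : V), G.Adj a b →
      (∀ j : Fin ℓ, j < i → ¬ (T j).Adj a b) →
      ∃ p : (T i).Walk a b, (p.length : ℝ) ≤ Real.log (Fintype.card V))
    (u v : V) (huv : G.Adj u v) (hnot : ∀ i, ¬ (T i).Adj u v) :
    Reff (unionWeight T) u v
      ≤ ENNReal.ofReal (Real.log (Fintype.card V) / ℓ) := by
  classical
  have hnt : Nontrivial V := ⟨⟨u, v, huv.ne⟩⟩
  have hn : (1 : ℝ) < (Fintype.card V : ℝ) := by
    exact_mod_cast Fintype.one_lt_card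
  set L : ℝ := Real.log (Fintype.card V) with hLdef
  have hL : 0 < L := Real.log_pos hn
  have hℓR : (0 : ℝ) < (ℓ : ℝ) := by exact_mod_cast hℓ
  rw [Reff]
  apply iSup_le
  intro x
  -- choose a path of length at most `L` in each `T i`
  have hpaths : ∀ i : Fin ℓ, ∃ q : (T i).Walk u v, q.IsPath ∧ (q.length : ℝ) ≤ L := by
    intro i
    obtain ⟨q, hq⟩ := hspanner i u v huv (fun j _ => hnot j)
    refine ⟨q.bypass, q.bypass_isPath, le_trans ?_ hq⟩
    exact_mod_cast q.length_bypass_le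
  choose p hpath hlen using hpaths
  set g : V × V → ℝ := fun pr => (x pr.1 - x pr.2) ^ 2 with hgdef
  have hgsymm : ∀ pr : V × V, g pr.swap = g pr := by
    intro pr; simp only [hgdef, Prod.fst_swap, Prod.snd_swap]; ring
  have hgnn : ∀ pr, 0 ≤ g pr := fun pr => sq_nonneg _
  set dsum : Fin ℓ → ℝ := fun i => ((p i).darts.map (fun d => g d.toProd)).sum with hdsumdef
  have hdsum_nn : ∀ i, 0 ≤ dsum i := by
    intro i
    apply List.sum_nonneg
    intro a ha
    obtain ⟨d, _, rfl⟩ := List.mem_map.1 ha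
    exact hgnn _
  -- Cauchy–Schwarz along each path
  have hA : ∀ i, (x u - x v) ^ 2 ≤ L * dsum i := by
    intro i
    have ht := walk_telescope' x (p i)
    set l : List ℝ := (p i).darts.map (fun d => x d.toProd.1 - x d.toProd.2) with hldef
    have hcs := list_sq_sum' l
    have hlen' : (l.length : ℝ) ≤ L := by
      rw [hldef, List.length_map, (p i).length_darts]
      exact hlen i
    have hmapsq : (l.map (fun t => t ^ 2)).sum = dsum i := by
      rw [hldef, List.map_map]
      rfl
    rw [ht]
    calc l.sum ^ 2 ≤ (l.length : ℝ) * (l.map (fun t => t ^ 2)).sum := hcs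
      _ = (l.length : ℝ) * dsum i := by rw [hmapsq]
      _ ≤ L * dsum i := mul_le_mul_of_nonneg_right hlen' (hdsum_nn i)
  -- the quadratic form as a sum over adjacent ordered pairs
  set P : Finset (V × V) := Finset.univ.filter (fun pr => ∃ i, (T i).Adj pr.1 pr.2) with hPdef
  have hQF : quadForm (unionWeight T) x = (1 / 2) * ∑ pr ∈ P, g pr := by
    rw [quadForm]
    congr 1
    rw [← Finset.sum_product', Finset.univ_product_univ]
    have hterm : ∀ pr : V × V,
        unionWeight T pr.1 pr.2 * (x pr.1 - x pr.2) ^ 2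
          = if ∃ i, (T i).Adj pr.1 pr.2 then g pr else 0 := by
      intro pr
      by_cases h : ∃ i, (T i).Adj pr.1 pr.2 <;> simp [unionWeight, h, hgdef]
    rw [Finset.sum_congr rfl (fun pr _ => hterm pr), ← Finset.sum_filter]
  -- the list of (both orientations of) all darts of all the paths
  set fL : Fin ℓ → List (V × V) :=
    fun i => (p i).darts.flatMap (fun d => [d.toProd, d.toProd.swap]) with hfLdef
  have hmemfL : ∀ i pr, pr ∈ fL i → (T i).Adj pr.1 pr.2 := by
    intro i pr hpr
    obtain ⟨d, _, hpr⟩ := List.mem_flatMap.1 hpr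
    simp only [List.mem_cons, List.mem_singleton, List.not_mem_nil, or_false] at hpr
    rcases hpr with h | h
    · rw [h]; exact d.adj
    · rw [h]; simpa using d.adj.symm
  have hedge : ∀ (i : Fin ℓ) (d : (T i).Dart) (pr : V × V),
      pr ∈ [d.toProd, d.toProd.swap] → Sym2.mk pr.1 pr.2 = d.edge := by
    intro i d pr hpr
    simp only [List.mem_cons, List.mem_singleton, List.not_mem_nil, or_false] at hpr
    rcases hpr with h | h
    · rw [h]; rfl
    · rw [h, Sym2.mk_prod_swap_eq]; rfl
  have hfLnodup : ∀ i, (fL i).Nodup := by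
    intro i
    rw [hfLdef, List.nodup_flatMap]
    constructor
    · intro d _
      refine List.nodup_cons.2 ⟨?_, List.nodup_singleton _⟩
      simp only [List.mem_singleton]
      intro h
      exact d.adj.ne (by rw [← Prod.fst_swap (p := d.toProd), ← h])
    · have hed : ((p i).darts.map SimpleGraph.Dart.edge).Nodup :=
        (hpath i).isTrail.edges_nodup
      have hpw : (p i).darts.Pairwise (fun d d' => d.edge ≠ d'.edge) :=
        List.pairwise_map.1 hed
      refine hpw.imp ?_
      intro d d' hne
      intro pr h1 h2
      exact hne ((hedge i d pr h1).symm.trans (hedge i d' pr h2))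
  set B : List (V × V) := (List.finRange ℓ).flatMap fL with hBdef
  have hBnodup : B.Nodup := by
    rw [hBdef, List.nodup_flatMap]
    refine ⟨fun i _ => hfLnodup i, ?_⟩
    refine (List.nodup_finRange ℓ).imp ?_
    intro i j hij
    intro pr h1 h2
    have hai := hmemfL i pr h1
    have haj := hmemfL j pr h2
    have hbot : (T i ⊓ T j) = ⊥ := disjoint_iff.mp (hdisj i j hij)
    have : (T i ⊓ T j).Adj pr.1 pr.2 := ⟨hai, haj⟩
    rw [hbot] at this
    exact this.elim
  have hfLsum : ∀ i, ((fL i).map g).sum = 2 * dsum i := by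
    intro i
    rw [hfLdef, sum_map_flatMap_pair']
    have : ((p i).darts.map (fun d => g d.toProd.swap)).sum
        = ((p i).darts.map (fun d => g d.toProd)).sum := by
      congr 1
      apply List.map_congr_left
      intro d _
      exact hgsymm d.toProd
    rw [this, hdsumdef]
    ring
  have hBsum : (B.map g).sum = ∑ i : Fin ℓ, 2 * dsum i := by
    rw [hBdef, sum_flatMap_map', Fin.sum_univ_def]
    congr 1
    apply List.map_congr_left
    intro i _
    exact hfLsum i
  have hkey : ∑ i : Fin ℓ, dsum i ≤ quadForm (unionWeight T) x := by
    have h1 : (B.map g).sum = B.toFinset.sum g := (List.sum_toFinset g hBnodup).symm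
    have h2 : B.toFinset ⊆ P := by
      intro pr hpr
      rw [List.mem_toFinset, hBdef] at hpr
      obtain ⟨i, _, hi⟩ := List.mem_flatMap.1 hpr
      rw [hPdef]
      simp only [Finset.mem_filter]
      exact ⟨Finset.mem_univ _, ⟨i, hmemfL i pr hi⟩⟩
    have h3 : B.toFinset.sum g ≤ ∑ pr ∈ P, g pr :=
      Finset.sum_le_sum_of_subset_of_nonneg h2 (fun pr _ _ => hgnn pr)
    have h4 : ∑ i : Fin ℓ, 2 * dsum i ≤ ∑ pr ∈ P, g pr := by
      rw [← hBsum, h1]; exact h3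
    have h5 : ∑ i : Fin ℓ, 2 * dsum i = 2 * ∑ i : Fin ℓ, dsum i := by
      rw [Finset.mul_sum]
    rw [hQF]
    linarith [h4, h5.symm.le]
  have hQnn : 0 ≤ quadForm (unionWeight T) x :=
    le_trans (Finset.sum_nonneg fun i _ => hdsum_nn i) hkey
  have hmain : (ℓ : ℝ) * (x u - x v) ^ 2 ≤ L * quadForm (unionWeight T) x := by
    calc (ℓ : ℝ) * (x u - x v) ^ 2 = ∑ _i : Fin ℓ, (x u - x v) ^ 2 := by
          rw [Finset.sum_const, Finset.card_univ, Fintype.card_fin, nsmul_eq_mul]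
      _ ≤ ∑ i : Fin ℓ, L * dsum i := Finset.sum_le_sum (fun i _ => hA i)
      _ = L * ∑ i : Fin ℓ, dsum i := by rw [Finset.mul_sum]
      _ ≤ L * quadForm (unionWeight T) x := mul_le_mul_of_nonneg_left hkey hL.le
  by_cases hA0 : (x u - x v) ^ 2 = 0
  · rw [hA0]
    simp
  · have hApos : 0 < (x u - x v) ^ 2 := lt_of_le_of_ne (sq_nonneg _) (Ne.symm hA0)
    have hQpos : 0 < quadForm (unionWeight T) x := by
      rcases lt_or_eq_of_le hQnn with h | h
      · exact h
      · exfalso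
        rw [← h, mul_zero] at hmain
        nlinarith
    rw [ENNReal.div_le_iff (by simp [ENNReal.ofReal_eq_zero]; linarith) ENNReal.ofReal_ne_top]
    rw [← ENNReal.ofReal_mul (by positivity)]
    apply ENNReal.ofReal_le_ofReal
    rw [div_mul_eq_mul_div, le_div_iff₀ hℓR]
    nlinarith [hmain]
end
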